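/- arXiv:2407.09433 — 7 statements merged into one kernel-verified Lean document; each statement's English description precedes it below -/
import Mathlib

section
/- Let $c, c' \in \mathbb{R}_{\geq 0}^k$ be capacity vectors and let $\mathcal{S}_c = \{S \subseteq [k] : c(S) \leq c([k] \setminus S)\}$ (where $c(S) = \sum_{i \in S} c_i$). Suppose $c = \sum_{i=1}^{\ell} \lambda_i q_i$ and $c' = \sum_{i=1}^{\ell} \mu_i q_i$ where $\lambda_i, \mu_i \geq 0$ and each $q_i \in \mathbb{R}_{\geq 0}^k$ satisfies $q_i(S) \leq q_i([k] \setminus S)$ for all $S \in \mathcal{S}_c$ and all $S \in \mathcal{S}_{c'}$. Then $\mathcal{S}_c = \mathcal{S}_{c'}$. -/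
open Finset

theorem stmt0 (k ℓ : ℕ) (c c' : Fin k → ℝ) (hc : ∀ i, 0 ≤ c i) (hc' : ∀ i, 0 ≤ c' i)
    (q : Fin ℓ → Fin k → ℝ) (hq : ∀ i j, 0 ≤ q i j)
    (lam mu : Fin ℓ → ℝ) (hlam : ∀ i, 0 ≤ lam i) (hmu : ∀ i, 0 ≤ mu i)
    (hcomb : ∀ j, c j = ∑ i, lam i * q i j)
    (hcomb' : ∀ j, c' j = ∑ i, mu i * q i j)
    (hagree : ∀ (i : Fin ℓ) (S : Finset (Fin k)),
      ((∑ j ∈ S, c j ≤ ∑ j ∈ Sᶜ, c j) ∨ (∑ j ∈ S, c' j ≤ ∑ j ∈ Sᶜ, c' j)) →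
      ∑ j ∈ S, q i j ≤ ∑ j ∈ Sᶜ, q i j) :
    ∀ S : Finset (Fin k),
      (∑ j ∈ S, c j ≤ ∑ j ∈ Sᶜ, c j) ↔ (∑ j ∈ S, c' j ≤ ∑ j ∈ Sᶜ, c' j) := by
  intro S
  constructor
  · intro h
    have key : ∀ i, ∑ j ∈ S, q i j ≤ ∑ j ∈ Sᶜ, q i j := fun i => hagree i S (Or.inl h)
    simp only [hcomb']
    rw [Finset.sum_comm, Finset.sum_comm (s := Sᶜ)]
    exact Finset.sum_le_sum fun i _ => by
      rw [← Finset.mul_sum, ← Finset.mul_sum]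
      exact mul_le_mul_of_nonneg_left (key i) (hmu i)
  · intro h
    have key : ∀ i, ∑ j ∈ S, q i j ≤ ∑ j ∈ Sᶜ, q i j := fun i => hagree i S (Or.inr h)
    simp only [hcomb]
    rw [Finset.sum_comm, Finset.sum_comm (s := Sᶜ)]
    exact Finset.sum_le_sum fun i _ => by
      rw [← Finset.mul_sum, ← Finset.mul_sum]
      exact mul_le_mul_of_nonneg_left (key i) (hlam i)
end

section
/- Let $c, c' \in \mathbb{R}_{\geq 0}^k$ and define $\mathcal{S}'_c = \{(A,B) : A, B \subseteq [k], A \cap B = \emptyset, c(A) \leq c(B)\}$. Suppose $c = \sum_{i=1}^{\ell} \lambda_i q_i$ and $c' = \sum_{i=1}^{\ell} \mu_i q_i$ with $\lambda_i, \mu_i \geq 0$, where each $q_i \in \mathbb{R}_{\geq 0}^k$ satisfies $q_i(A) \leq q_i(B)$ for every $(A,B) \in \mathcal{S}'_c \cup \mathcal{S}'_{c'}$. Then $\mathcal{S}'_c = \mathcal{S}'_{c'}$. -/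
open Finset

theorem stmt1 (k ℓ : ℕ) (c c' : Fin k → ℝ) (hc : ∀ i, 0 ≤ c i) (hc' : ∀ i, 0 ≤ c' i)
    (q : Fin ℓ → Fin k → ℝ) (hq : ∀ i j, 0 ≤ q i j)
    (lam mu : Fin ℓ → ℝ) (hlam : ∀ i, 0 ≤ lam i) (hmu : ∀ i, 0 ≤ mu i)
    (hcomb : ∀ j, c j = ∑ i, lam i * q i j)
    (hcomb' : ∀ j, c' j = ∑ i, mu i * q i j)
    (hagree : ∀ (i : Fin ℓ) (A B : Finset (Fin k)), Disjoint A B →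
      ((∑ j ∈ A, c j ≤ ∑ j ∈ B, c j) ∨ (∑ j ∈ A, c' j ≤ ∑ j ∈ B, c' j)) →
      ∑ j ∈ A, q i j ≤ ∑ j ∈ B, q i j) :
    ∀ A B : Finset (Fin k), Disjoint A B →
      ((∑ j ∈ A, c j ≤ ∑ j ∈ B, c j) ↔ (∑ j ∈ A, c' j ≤ ∑ j ∈ B, c' j)) := by
  intro A B hAB
  have hc'sum : ∀ S : Finset (Fin k), ∑ j ∈ S, c' j = ∑ i, mu i * ∑ j ∈ S, q i j := by
    intro S
    simp only [hcomb', Finset.mul_sum]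
    exact Finset.sum_comm
  have hcsum : ∀ S : Finset (Fin k), ∑ j ∈ S, c j = ∑ i, lam i * ∑ j ∈ S, q i j := by
    intro S
    simp only [hcomb, Finset.mul_sum]
    exact Finset.sum_comm
  constructor
  · intro h
    rw [hc'sum, hc'sum]
    exact Finset.sum_le_sum fun i _ =>
      mul_le_mul_of_nonneg_left (hagree i A B hAB (Or.inl h)) (hmu i)
  · intro h
    rw [hcsum, hcsum]
    exact Finset.sum_le_sum fun i _ =>
      mul_le_mul_of_nonneg_left (hagree i A B hAB (Or.inr h)) (hlam i)
end

section
/- Let $c_1, c_2 \in \mathbb{R}_{\geq 0}^k$ be capacity vectors of two stars on the same terminal set $[k]$ that strongly agree, i.e., for all disjoint $A, B \subseteq [k]$: $c_1(A) \leq c_1(B)$ if and only if $c_2(A) \leq c_2(B)$. Let $d \in \mathbb{R}_{\geq 0}^{[k] \times [k]}$ be a symmetric demand with $d(i,i) = 0$ such that $\sum_j d(i,j) \leq c_1(i) + c_2(i)$ for all $i$. Then there exist symmetric demands $d_1, d_2 \geq 0$ with $d_1 + d_2 = d$, $\sum_j d_1(i,j) \leq c_1(i)$ for all $i$, and $\sum_j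 d_2(i,j) \leq c_2(i)$ for all $i$. -/
/-!
Splitting `d` amounts to finding a symmetric `0 ≤ x ≤ d` (the part `d₂`) whose row sums lie in
`[∑ⱼ d i j - c₁ i, c₂ i]`. By Hahn–Banach separation it suffices that for every weight vector `y`
the best point of the box is no better than `x i j = d i j · [y i + y j > 0]`. With `p = y⁺` and
`q = y⁻` this is `∑ d i j · min (p i) (q j) ≤ ∑ c₁ p + ∑ c₂ q`, and peeling off layers of `p` and
`q` reduces it to indicator vectors of disjoint sets: `d(P, N) ≤ c₁(P) + c₂(N)`. This cut condition
is where strong agreement enters: `d(P, N)` is at most `c₁(P) + c₂(P)` and at most `c₁(N) + c₂(N)`,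
and `c₁(P) ≤ c₁(N)` forces `c₂(P) ≤ c₂(N)`.
-/

open Finset

theorem posPart_add_eq (x y : ℝ) :
    (x + y)⁺ = x⁺ - min x⁺ y⁻ + (y⁺ - min y⁺ x⁻) := by
  simp only [posPart_def, negPart_def, max_def, min_def]
  split_ifs <;> linarith

theorem ite_pos_mul_self (c s : ℝ) : (if 0 < s then c else 0) * s = c * s⁺ := by
  split_ifs with h
  · rw [posPart_eq_self.mpr h.le]
  · rw [posPart_eq_zero.mpr (not_lt.mp h)]; ring

theorem ite_nonneg_mul_self (l u s : ℝ) : (if 0 ≤ s then l else u) * s = l * s⁺ - u * s⁻ := by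
  split_ifs with h
  · rw [posPart_eq_self.mpr h, negPart_eq_zero.mpr h]; ring
  · rw [posPart_eq_zero.mpr (not_le.mp h).le, negPart_eq_neg.mpr (not_le.mp h).le]; ring

theorem posPart_sub_add_min (x m : ℝ) : (x - m)⁺ + min x m = x := by
  rcases le_total x m with h | h <;> simp [h]

theorem min_posPart_sub_add_min_min (x y m : ℝ) :
    min (x - m)⁺ (y - m)⁺ + min (min x y) m = min x y := by
  have hmono : Monotone fun t : ℝ => (t - m)⁺ := fun s t h => posPart_mono (by linarith)
  rw [← hmono.map_min, posPart_sub_add_min]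

theorem min_eq_ite_of_le {x m : ℝ} (hm : 0 ≤ m) (hxm : x ≠ 0 → m ≤ x) :
    min x m = if x ≠ 0 then m else 0 := by
  by_cases h : x = 0
  · simp [h, hm]
  · simp [h, hxm h]

variable {ι : Type*} [Fintype ι]

theorem sum_sum_eq_of_add_swap_eq {F G : ι → ι → ℝ} (h : ∀ i j, F i j + F j i = G i j + G j i) :
    ∑ i, ∑ j, F i j = ∑ i, ∑ j, G i j := by
  have hF : ∑ i, ∑ j, F i j = ∑ i, ∑ j, F j i := sum_comm
  have hG : ∑ i, ∑ j, G i j = ∑ i, ∑ j, G j i := sum_comm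
  have hFG : ∑ i, ∑ j, (F i j + F j i) = ∑ i, ∑ j, (G i j + G j i) := by simp_rw [h]
  simp only [sum_add_distrib] at hFG
  linarith

theorem sum_mul_eq_sum_mul_posPart_sub_add {c r : ι → ℝ} {m : ℝ} (hm : 0 ≤ m)
    (hrm : ∀ i, r i ≠ 0 → m ≤ r i) :
    ∑ i, c i * r i = ∑ i, c i * (r i - m)⁺ + m * ∑ i ∈ {i | r i ≠ 0}, c i := by
  rw [sum_filter, mul_sum, ← sum_add_distrib]
  refine sum_congr rfl fun i _ => ?_
  conv_lhs => rw [← posPart_sub_add_min (r i) m, min_eq_ite_of_le hm (hrm i)]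
  split_ifs <;> ring

theorem sum_sum_mul_min_eq_add {d : ι → ι → ℝ} {p q : ι → ℝ} {m : ℝ} (hm : 0 ≤ m)
    (hpm : ∀ i, p i ≠ 0 → m ≤ p i) (hqm : ∀ i, q i ≠ 0 → m ≤ q i) :
    ∑ i, ∑ j, d i j * min (p i) (q j) =
      ∑ i, ∑ j, d i j * min (p i - m)⁺ (q j - m)⁺ +
        m * ∑ i ∈ {i | p i ≠ 0}, ∑ j ∈ {j | q j ≠ 0}, d i j := by
  simp_rw [sum_filter, ite_sum_zero, mul_sum, ← sum_add_distrib]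
  refine sum_congr rfl fun i _ => sum_congr rfl fun j _ => ?_
  rw [← min_posPart_sub_add_min_min (p i) (q j) m, inf_inf_distrib_right,
    min_eq_ite_of_le hm (hpm i), min_eq_ite_of_le hm (hqm j)]
  split_ifs <;> simp [hm]; ring

theorem sum_sum_mul_min_le {d : ι → ι → ℝ} {a b : ι → ℝ}
    (hcut : ∀ P N : Finset ι, Disjoint P N →
      ∑ i ∈ P, ∑ j ∈ N, d i j ≤ ∑ i ∈ P, a i + ∑ j ∈ N, b j)
    {p q : ι → ℝ} (hp : 0 ≤ p) (hq : 0 ≤ q) (hpq : ∀ i, p i = 0 ∨ q i = 0) :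
    ∑ i, ∑ j, d i j * min (p i) (q j) ≤ ∑ i, a i * p i + ∑ j, b j * q j := by
  induction hn : #{i | p i ≠ 0 ∨ q i ≠ 0} using Nat.strong_induction_on generalizing p q with
  | _ n ih =>
  rcases (filter (fun i => p i ≠ 0 ∨ q i ≠ 0) univ).eq_empty_or_nonempty with hzero | hne
  · have hpq0 : ∀ i, p i = 0 ∧ q i = 0 := fun i => by
      simpa [not_or] using (filter_eq_empty_iff.mp hzero) (mem_univ i)
    simp [hpq0]
  -- Peel off the bottom layer of height `m`, the least nonzero value of `p` and `q`.
  obtain ⟨i₀, hi₀, hmin⟩ := exists_min_image _ (fun i => p i + q i) hne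
  set m := p i₀ + q i₀
  have hm : 0 < m := by
    rcases (mem_filter.mp hi₀).2 with h | h
    · exact add_pos_of_pos_of_nonneg ((hp i₀).lt_of_ne' h) (hq i₀)
    · exact add_pos_of_nonneg_of_pos (hp i₀) ((hq i₀).lt_of_ne' h)
  have hpm : ∀ i, p i ≠ 0 → m ≤ p i := fun i h => by
    simpa [(hpq i).resolve_left h] using hmin i (by simp [h])
  have hqm : ∀ i, q i ≠ 0 → m ≤ q i := fun i h => by
    simpa [(hpq i).resolve_right h] using hmin i (by simp [h])
  have hlt : #{i | (p i - m)⁺ ≠ 0 ∨ (q i - m)⁺ ≠ 0} < n := by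
    rw [← hn]
    refine card_lt_card ((ssubset_iff_of_subset fun i => ?_).mpr ⟨i₀, hi₀, ?_⟩)
    · simp only [mem_filter, mem_univ, true_and]
      refine Or.imp (mt fun h => ?_) (mt fun h => ?_) <;> simp [h, hm.le]
    · simpa [posPart_eq_zero, m] using ⟨hq i₀, hp i₀⟩
  have hind := ih _ hlt (fun i => posPart_nonneg _) (fun i => posPart_nonneg _)
    (fun i => (hpq i).imp (fun h => by simp [h, hm.le]) (fun h => by simp [h, hm.le])) rfl
  have hbottom := hcut {i | p i ≠ 0} {j | q j ≠ 0}
    (disjoint_filter.mpr fun i _ hpi hqi => (hpq i).elim hpi hqi)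
  rw [sum_sum_mul_min_eq_add hm.le hpm hqm, sum_mul_eq_sum_mul_posPart_sub_add hm.le hpm,
    sum_mul_eq_sum_mul_posPart_sub_add hm.le hqm]
  linarith [mul_le_mul_of_nonneg_left hbottom hm.le]

theorem sum_sum_ite_mul_eq {d : ι → ι → ℝ} (hsym : ∀ i j, d i j = d j i) (y : ι → ℝ) :
    ∑ i, ∑ j, (if 0 < y i + y j then d i j else 0) * y i =
      ∑ i, ∑ j, d i j * ((y i)⁺ - min (y i)⁺ (y j)⁻) :=
  sum_sum_eq_of_add_swap_eq fun i j => by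
    rw [hsym j i, add_comm (y j) (y i), ← mul_add, ite_pos_mul_self, posPart_add_eq]; ring

theorem sum_ite_mul_le {d : ι → ι → ℝ} {a b : ι → ℝ} (hsym : ∀ i j, d i j = d j i)
    (hcut : ∀ P N : Finset ι, Disjoint P N →
      ∑ i ∈ P, ∑ j ∈ N, d i j ≤ ∑ i ∈ P, a i + ∑ j ∈ N, b j) (y : ι → ℝ) :
    ∑ i, (if 0 ≤ y i then ∑ j, d i j - a i else b i) * y i ≤
      ∑ i, (∑ j, if 0 < y i + y j then d i j else 0) * y i := by
  have hmin := sum_sum_mul_min_le hcut (p := fun i => (y i)⁺) (q := fun i => (y i)⁻)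
    (fun i => posPart_nonneg _) (fun i => negPart_nonneg _) fun i => by
      rcases le_total (y i) 0 with h | h
      · exact Or.inl (posPart_eq_zero.mpr h)
      · exact Or.inr (negPart_eq_zero.mpr h)
  simp only [ite_nonneg_mul_self, sub_mul, sum_mul, sum_sub_distrib, sum_sum_ite_mul_eq hsym,
    mul_sub]
  linarith

theorem inter_nonempty_of_forall_exists_le {E : Type*} [TopologicalSpace E] [AddCommGroup E]
    [Module ℝ E] [IsTopologicalAddGroup E] [ContinuousSMul ℝ E] [LocallyConvexSpace ℝ E]
    {s t : Set E} (hs₁ : Convex ℝ s) (hs₂ : IsCompact s) (ht₁ : Convex ℝ t) (ht₂ : IsClosed t)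
    (h : ∀ f : StrongDual ℝ E, ∃ a ∈ s, ∃ b ∈ t, f b ≤ f a) : (s ∩ t).Nonempty := by
  by_contra hst
  obtain ⟨f, u, v, hfs, huv, hft⟩ := geometric_hahn_banach_compact_closed hs₁ hs₂ ht₁ ht₂
    (Set.disjoint_iff_inter_eq_empty.mpr (Set.not_nonempty_iff_eq_empty.mp hst))
  obtain ⟨a, ha, b, hb, hab⟩ := h f
  linarith [hfs a ha, hft b hb]

theorem exists_symm_rowSum_mem_Icc {d : ι → ι → ℝ} {a b : ι → ℝ} (hd : ∀ i j, 0 ≤ d i j)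
    (hsym : ∀ i j, d i j = d j i) (hcap : ∀ i, ∑ j, d i j ≤ a i + b i)
    (hcut : ∀ P N : Finset ι, Disjoint P N →
      ∑ i ∈ P, ∑ j ∈ N, d i j ≤ ∑ i ∈ P, a i + ∑ j ∈ N, b j) :
    ∃ x : ι → ι → ℝ, (∀ i j, x i j = x j i) ∧ (∀ i j, 0 ≤ x i j) ∧ (∀ i j, x i j ≤ d i j) ∧
      ∀ i, ∑ j, x i j ∈ Set.Icc (∑ j, d i j - a i) (b i) := by
  classical
  let K : Set (ι → ι → ℝ) := Set.Icc 0 d ∩ {x | ∀ i j, x i j = x j i}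
  let rowSum : (ι → ι → ℝ) →ₗ[ℝ] ι → ℝ :=
    { toFun x i := ∑ j, x i j
      map_add' x x' := by ext; simp [sum_add_distrib]
      map_smul' c x := by ext; simp [mul_sum] }
  have hK : IsCompact K := isCompact_Icc.inter_right <| by
    simp only [Set.ofPred_forall]
    exact isClosed_iInter fun i => isClosed_iInter fun j => isClosed_eq (by fun_prop) (by fun_prop)
  have hKc : Convex ℝ K := (convex_Icc 0 d).inter fun x hx x' hx' s t _ _ _ i j => by
    simp [hx i j, hx' i j]
  obtain ⟨_, ⟨x, ⟨⟨hx0, hxd⟩, hxs⟩, rfl⟩, hx⟩ :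
      (rowSum '' K ∩ Set.Icc (fun i => ∑ j, d i j - a i) b).Nonempty := by
    refine inter_nonempty_of_forall_exists_le (hKc.linear_image rowSum)
      (hK.image rowSum.continuous_of_finiteDimensional) (convex_Icc _ _) isClosed_Icc fun f => ?_
    set y : ι → ℝ := fun i => f fun j => if i = j then 1 else 0
    have hf (w : ι → ℝ) : f w = ∑ i, w i * y i := f.toLinearMap.pi_apply_eq_sum_univ w
    -- Compare the point of `K` maximising `f ∘ rowSum` with the point of the box minimising `f`.
    refine ⟨rowSum fun i j => if 0 < y i + y j then d i j else 0,
      ⟨_, ⟨⟨fun i j => ?_, fun i j => ?_⟩, fun i j => ?_⟩, rfl⟩,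
      fun i => if 0 ≤ y i then ∑ j, d i j - a i else b i, ⟨fun i => ?_, fun i => ?_⟩, ?_⟩
    · split_ifs
      exacts [hd i j, le_rfl]
    · split_ifs
      exacts [le_rfl, hd i j]
    · simp only [hsym i j, add_comm (y i)]
    · dsimp only
      split_ifs
      exacts [le_rfl, by linarith [hcap i]]
    · dsimp only
      split_ifs
      exacts [by linarith [hcap i], le_rfl]
    · rw [hf, hf]
      exact sum_ite_mul_le hsym hcut y
  exact ⟨x, hxs, fun i j => hx0 i j, fun i j => hxd i j, fun i => ⟨hx.1 i, hx.2 i⟩⟩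

theorem sum_sum_le_sum_of_rowSum_le {d : ι → ι → ℝ} {c : ι → ℝ} (hd : ∀ i j, 0 ≤ d i j)
    (hc : ∀ i, ∑ j, d i j ≤ c i) (P N : Finset ι) :
    ∑ i ∈ P, ∑ j ∈ N, d i j ≤ ∑ i ∈ P, c i :=
  sum_le_sum fun i _ =>
    (sum_le_sum_of_subset_of_nonneg (subset_univ N) fun j _ _ => hd i j).trans (hc i)

theorem sum_sum_le_add_of_agree {c₁ c₂ : ι → ℝ}
    (hagree : ∀ A B : Finset ι, Disjoint A B →
      ∑ i ∈ A, c₁ i ≤ ∑ i ∈ B, c₁ i → ∑ i ∈ A, c₂ i ≤ ∑ i ∈ B, c₂ i)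
    {d : ι → ι → ℝ} (hd : ∀ i j, 0 ≤ d i j) (hsym : ∀ i j, d i j = d j i)
    (hcap : ∀ i, ∑ j, d i j ≤ c₁ i + c₂ i) {P N : Finset ι} (hPN : Disjoint P N) :
    ∑ i ∈ P, ∑ j ∈ N, d i j ≤ ∑ i ∈ P, c₁ i + ∑ j ∈ N, c₂ j := by
  have hP := sum_sum_le_sum_of_rowSum_le hd hcap P N
  have hN := sum_sum_le_sum_of_rowSum_le (fun i j => hd j i)
    (fun i => (sum_congr rfl fun j _ => hsym j i).trans_le (hcap i)) N P
  rw [sum_comm] at hN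
  simp only [sum_add_distrib] at hP hN
  rcases le_total (∑ i ∈ P, c₁ i) (∑ i ∈ N, c₁ i) with h | h
  · linarith [hagree P N hPN h]
  · linarith

theorem stmt7_general (k : ℕ) (c1 c2 : Fin k → ℝ)
    (hsa : ∀ A B : Finset (Fin k), Disjoint A B →
      ((∑ i ∈ A, c1 i ≤ ∑ i ∈ B, c1 i) ↔ (∑ i ∈ A, c2 i ≤ ∑ i ∈ B, c2 i)))
    (d : Fin k → Fin k → ℝ) (hd : ∀ i j, 0 ≤ d i j)
    (hsym : ∀ i j, d i j = d j i)
    (hcap : ∀ i, ∑ j, d i j ≤ c1 i + c2 i) :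
    ∃ d1 d2 : Fin k → Fin k → ℝ,
      (∀ i j, 0 ≤ d1 i j) ∧ (∀ i j, 0 ≤ d2 i j) ∧
      (∀ i j, d1 i j = d1 j i) ∧ (∀ i j, d2 i j = d2 j i) ∧
      (∀ i j, d1 i j + d2 i j = d i j) ∧
      (∀ i, ∑ j, d1 i j ≤ c1 i) ∧ (∀ i, ∑ j, d2 i j ≤ c2 i) := by
  obtain ⟨x, hxs, hx0, hxd, hx⟩ := exists_symm_rowSum_mem_Icc hd hsym hcap fun P N hPN =>
    sum_sum_le_add_of_agree (fun A B hAB => (hsa A B hAB).mp) hd hsym hcap hPN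
  refine ⟨fun i j => d i j - x i j, x, fun i j => sub_nonneg.mpr (hxd i j), hx0,
    fun i j => by simp only [hsym i j, hxs i j], hxs, fun i j => sub_add_cancel _ _,
    fun i => ?_, fun i => (hx i).2⟩
  rw [sum_sub_distrib]
  linarith [(hx i).1]

theorem stmt7 (k : ℕ) (c1 c2 : Fin k → ℝ) (h1 : ∀ i, 0 ≤ c1 i) (h2 : ∀ i, 0 ≤ c2 i)
    (hsa : ∀ A B : Finset (Fin k), Disjoint A B →
      ((∑ i ∈ A, c1 i ≤ ∑ i ∈ B, c1 i) ↔ (∑ i ∈ A, c2 i ≤ ∑ i ∈ B, c2 i)))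
    (d : Fin k → Fin k → ℝ) (hd : ∀ i j, 0 ≤ d i j)
    (hsym : ∀ i j, d i j = d j i) (hdiag : ∀ i, d i i = 0)
    (hcap : ∀ i, ∑ j, d i j ≤ c1 i + c2 i) :
    ∃ d1 d2 : Fin k → Fin k → ℝ,
      (∀ i j, 0 ≤ d1 i j) ∧ (∀ i j, 0 ≤ d2 i j) ∧
      (∀ i j, d1 i j = d1 j i) ∧ (∀ i j, d2 i j = d2 j i) ∧
      (∀ i j, d1 i j + d2 i j = d i j) ∧
      (∀ i, ∑ j, d1 i j ≤ c1 i) ∧ (∀ i, ∑ j, d2 i j ≤ c2 i) :=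
  stmt7_general k c1 c2 hsa d hd hsym hcap
end

section
/- Let $T$ be a tree, and $Y \subseteq V(T)$ a set of at most $m$ nodes that is closed under taking lowest common ancestors (with respect to a fixed root). Partition the connected components of $T - Y$ into regions, grouping components with the same set of neighbors in $Y$. Then every region has at most 2 neighbors in $Y$, and the number of regions is at most $2|Y|$. -/
/-!
If `y₁, y₂ ∈ Y` both neighbour a component `C` of `T - Y`, the tree path from `y₁` to `y₂` runs
through `C` apart from its ends. Their lowest common ancestor lies on that path and in `Y`, so it
is `y₁` or `y₂`: the neighbourhood of `C` is a chain of ancestors. In a chain of three the middle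
one would lie on the path between the other two, inside `C`; hence at most two neighbours.

For the count, send a region to its lowest neighbour `b`. A region `{b}` is determined by `b`.
So is a region `{a, b}` with `a` above `b`: the parent of `b` lies on the path from `b` to `a`, so
it is either `a` itself or a vertex of the region's components.
-/

open Finset

/-- In the tree `T` rooted at `r`, `a` is an ancestor of `b` (i.e. `a` lies on the
unique path from `r` to `b`): every walk from `r` to `b` passes through `a`. -/
def Ancestor {V : Type*} (T : SimpleGraph V) (r a b : V) : Prop :=
  ∀ p : T.Walk r b, a ∈ p.support

/-- `l` is the lowest common ancestor of `u` and `v` in `T` rooted at `r`. -/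
def IsLCA {V : Type*} (T : SimpleGraph V) (r l u v : V) : Prop :=
  Ancestor T r l u ∧ Ancestor T r l v ∧
    ∀ a, Ancestor T r a u → Ancestor T r a v → Ancestor T r a l

/-- `x` and `y` are connected in `T - Y`: there is a walk avoiding `Y`. -/
def ReachOff {V : Type*} (T : SimpleGraph V) (Y : Set V) (x y : V) : Prop :=
  ∃ p : T.Walk x y, ∀ z ∈ p.support, z ∉ Y

/-- The neighborhood in `Y` of the component of `T - Y` containing `x`. -/
def compNbhd {V : Type*} (T : SimpleGraph V) (Y : Set V) (x : V) : Set V :=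
  {y ∈ Y | ∃ z, ReachOff T Y x z ∧ T.Adj z y}

open SimpleGraph Walk

namespace SimpleGraph.Walk

variable {V : Type*} {G : SimpleGraph V}

lemma exists_append_of_first_mem {u v : V} (p : G.Walk u v) {S : Set V} (hv : v ∈ S) :
    ∃ l ∈ S, ∃ (q : G.Walk u l) (q' : G.Walk l v),
      p = q.append q' ∧ ∀ z ∈ q.support, z ∈ S → z = l := by
  induction p with
  | nil => exact ⟨_, hv, nil, nil, rfl, by simp⟩
  | @cons u w v h p ih =>
    by_cases hu : u ∈ S
    · exact ⟨u, hu, nil, cons h p, rfl, by simp⟩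
    · obtain ⟨l, hl, q, q', rfl, hfirst⟩ := ih hv
      refine ⟨l, hl, cons h q, q', rfl, ?_⟩
      simp only [support_cons, List.mem_cons, forall_eq_or_imp]
      exact ⟨fun h => absurd h hu, hfirst⟩

lemma IsPath.append {u v w : V} {p : G.Walk u v} {q : G.Walk v w} (hp : p.IsPath)
    (hq : q.IsPath) (h : ∀ z ∈ p.support, z ∈ q.support → z = v) : (p.append q).IsPath := by
  have hq' := hq.support_nodup
  rw [← cons_tail_support, List.nodup_cons] at hq'
  rw [isPath_def, support_append, List.nodup_append]
  refine ⟨hp.support_nodup, hq'.2, fun z hzp z' hzq hzz => ?_⟩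
  subst hzz
  obtain rfl := h z hzp (List.mem_of_mem_tail hzq)
  exact hq'.1 hzq

end SimpleGraph.Walk

section Ancestor

variable {V : Type*} {T : SimpleGraph V} {r a b c : V}

lemma ancestor_of_mem_support (hT : T.IsTree) {p : T.Walk r b} (hp : p.IsPath)
    (ha : a ∈ p.support) : Ancestor T r a b := by
  classical
  intro q
  obtain rfl : q.bypass = p := (hT.existsUnique_path r b).unique q.bypass_isPath hp
  exact q.support_bypass_subset_support ha

lemma ancestor_refl : Ancestor T r b b := fun p => p.end_mem_support

lemma Ancestor.trans (hab : Ancestor T r a b) (hbc : Ancestor T r b c) : Ancestor T r a c := by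
  classical
  exact fun p => p.support_takeUntil_subset_support (hbc p) (hab _)

lemma Ancestor.antisymm (hT : T.IsTree) (hab : Ancestor T r a b) (hba : Ancestor T r b a) :
    a = b := by
  classical
  obtain ⟨p, hp, -⟩ := hT.existsUnique_path r b
  by_contra hne
  exact endpoint_notMem_support_takeUntil hp (hab p) (Ne.symm hne) (hba _)

lemma Ancestor.mem_support_of_isPath (hT : T.IsTree) (hab : Ancestor T r a b)
    (hbc : Ancestor T r b c) {p : T.Walk a c} (hp : p.IsPath) : b ∈ p.support := by
  classical
  obtain ⟨q, hq, -⟩ := hT.existsUnique_path r c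
  have haq : a ∈ q.support := hab.trans hbc q
  have hbq := hbc q
  rw [← q.take_spec haq, mem_support_append_iff] at hbq
  rcases hbq with hb | hb
  · obtain rfl := hab.antisymm hT (ancestor_of_mem_support hT (hq.takeUntil haq) hb)
    exact p.start_mem_support
  · rwa [(hT.existsUnique_path a c).unique (hq.dropUntil haq) hp] at hb

lemma exists_isLCA_mem_support (hT : T.IsTree) (r : V) {u v : V} {p : T.Walk u v}
    (hp : p.IsPath) : ∃ l ∈ p.support, IsLCA T r l u v := by
  classical
  obtain ⟨q, hq, -⟩ := hT.existsUnique_path r v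
  obtain ⟨l, hlq, p₁, p₂, rfl, hfirst⟩ :=
    p.exists_append_of_first_mem (S := {z | z ∈ q.support}) q.end_mem_support
  have hql : (q.takeUntil l hlq).IsPath := hq.takeUntil hlq
  have hru : ((q.takeUntil l hlq).append p₁.reverse).IsPath :=
    hql.append hp.of_append_left.reverse fun z hz hz₁ =>
      hfirst z (by simpa using hz₁) (q.support_takeUntil_subset_support hlq hz)
  refine ⟨l, by simp, ancestor_of_mem_support hT hru (by simp),
    ancestor_of_mem_support hT hq hlq, fun a hau hav => ?_⟩
  have ha := hau ((q.takeUntil l hlq).append p₁.reverse)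
  rw [mem_support_append_iff] at ha
  rcases ha with ha | ha
  · exact ancestor_of_mem_support hT hql ha
  · rw [hfirst a (by simpa using ha : a ∈ p₁.support) (hav q)]
    exact ancestor_refl

end Ancestor

def LCAClosed {V : Type*} (T : SimpleGraph V) (r : V) (Y : Set V) : Prop :=
  ∀ u ∈ Y, ∀ v ∈ Y, ∀ l, IsLCA T r l u v → l ∈ Y

def regionNbhds {V : Type*} (T : SimpleGraph V) (Y : Set V) : Set (Set V) :=
  {N | ∃ x, x ∉ Y ∧ N = compNbhd T Y x}

section Regions

variable {V : Type*} {T : SimpleGraph V} {Y : Set V} {r x x' y z a b c : V}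

lemma ReachOff.refl (hx : x ∉ Y) : ReachOff T Y x x := ⟨nil, by simpa⟩

lemma ReachOff.symm (h : ReachOff T Y x y) : ReachOff T Y y x := by
  obtain ⟨p, hp⟩ := h
  exact ⟨p.reverse, by simpa using hp⟩

lemma ReachOff.trans (hxy : ReachOff T Y x y) (hyz : ReachOff T Y y z) : ReachOff T Y x z := by
  obtain ⟨p, hp⟩ := hxy
  obtain ⟨q, hq⟩ := hyz
  exact ⟨p.append q, fun w hw => ((mem_support_append_iff _ _).mp hw).elim (hp w) (hq w)⟩

lemma ReachOff.of_adj (h : T.Adj x y) (hx : x ∉ Y) (hy : y ∉ Y) : ReachOff T Y x y :=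
  ⟨h.toWalk, by simp [hx, hy]⟩

lemma compNbhd_eq_of_reachOff (h : ReachOff T Y x x') :
    compNbhd T Y x = compNbhd T Y x' := by
  ext y
  exact and_congr_right fun _ =>
    ⟨fun ⟨w, hw, hwy⟩ => ⟨w, h.symm.trans hw, hwy⟩, fun ⟨w, hw, hwy⟩ => ⟨w, h.trans hw, hwy⟩⟩

lemma compNbhd_nonempty_of_walk (p : T.Walk x y) (hx : x ∉ Y) (hy : y ∈ Y) :
    (compNbhd T Y x).Nonempty := by
  induction p with
  | nil => exact absurd hy hx
  | @cons x w y h p ih =>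
    by_cases hw : w ∈ Y
    · exact ⟨w, hw, x, ReachOff.refl hx, h⟩
    · rw [compNbhd_eq_of_reachOff (ReachOff.of_adj h hx hw)]
      exact ih hw hy

lemma compNbhd_nonempty (hT : T.Preconnected) (hY : Y.Nonempty) (hx : x ∉ Y) :
    (compNbhd T Y x).Nonempty :=
  compNbhd_nonempty_of_walk (hT x hY.some).some hx hY.some_mem

lemma eq_or_eq_or_reachOff_of_mem_support (hT : T.IsTree) (ha : a ∈ compNbhd T Y x)
    (hb : b ∈ compNbhd T Y x) {p : T.Walk a b} (hp : p.IsPath) (hc : c ∈ p.support) :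
    c = a ∨ c = b ∨ (c ∉ Y ∧ ReachOff T Y x c) := by
  classical
  obtain ⟨-, za, hxa, hza⟩ := ha
  obtain ⟨-, zb, hxb, hzb⟩ := hb
  obtain ⟨w, hw⟩ := hxa.symm.trans hxb
  obtain rfl : (cons hza.symm (w.concat hzb)).bypass = p :=
    (hT.existsUnique_path a b).unique (bypass_isPath _) hp
  have hc' := support_bypass_subset_support _ hc
  simp only [support_cons, support_concat, List.mem_cons, List.mem_append,
    List.mem_nil_iff, or_false] at hc'
  rcases hc' with rfl | hcw | rfl
  · exact .inl rfl
  · refine .inr (.inr ⟨hw c hcw, hxa.trans ⟨w.takeUntil c hcw, fun z hz => hw z ?_⟩⟩)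
    exact support_takeUntil_subset_support _ hcw hz
  · exact .inr (.inl rfl)

lemma ancestor_or_ancestor_of_mem_compNbhd (hT : T.IsTree) (hY : LCAClosed T r Y)
    (ha : a ∈ compNbhd T Y x) (hb : b ∈ compNbhd T Y x) :
    Ancestor T r a b ∨ Ancestor T r b a := by
  obtain ⟨p, hp, -⟩ := hT.existsUnique_path a b
  obtain ⟨l, hl, hlca⟩ := exists_isLCA_mem_support hT r hp
  rcases eq_or_eq_or_reachOff_of_mem_support hT ha hb hp hl with rfl | rfl | ⟨hlY, -⟩
  · exact .inl hlca.2.1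
  · exact .inr hlca.1
  · exact absurd (hY a ha.1 b hb.1 l hlca) hlY

lemma eq_or_eq_of_ancestor_of_ancestor (hT : T.IsTree) (ha : a ∈ compNbhd T Y x)
    (hb : b ∈ Y) (hc : c ∈ compNbhd T Y x) (hab : Ancestor T r a b) (hbc : Ancestor T r b c) :
    b = a ∨ b = c := by
  obtain ⟨p, hp, -⟩ := hT.existsUnique_path a c
  rcases eq_or_eq_or_reachOff_of_mem_support hT ha hc hp (hab.mem_support_of_isPath hT hbc hp)
    with h | h | ⟨hbY, -⟩
  exacts [.inl h, .inr h, absurd hb hbY]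

lemma snd_eq_or_reachOff_of_ancestor (hT : T.IsTree) (ha : a ∈ compNbhd T Y x)
    (hb : b ∈ compNbhd T Y x) (hab : Ancestor T r a b) (hne : a ≠ b) {p : T.Walk b r}
    (hp : p.IsPath) : p.snd = a ∨ (p.snd ∉ Y ∧ ReachOff T Y x p.snd) := by
  classical
  have hap : a ∈ p.support := by simpa using hab p.reverse
  rw [← snd_takeUntil hne p hap]
  have hnil : ¬ (p.takeUntil a hap).Nil := not_nil_of_ne hne.symm
  rcases eq_or_eq_or_reachOff_of_mem_support hT hb ha (hp.takeUntil hap)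
    ((p.takeUntil a hap).getVert_mem_support 1) with h | h | h
  exacts [absurd h ((p.takeUntil a hap).adj_snd hnil).ne', .inl h, .inr h]

lemma compNbhd_eq_of_eq_pair (hT : T.IsTree) {a' : V} (hx : compNbhd T Y x = {a, b})
    (hx' : compNbhd T Y x' = {a', b}) (hab : Ancestor T r a b) (ha'b : Ancestor T r a' b)
    (hne : a ≠ b) (hne' : a' ≠ b) : compNbhd T Y x = compNbhd T Y x' := by
  obtain ⟨p, hp, -⟩ := hT.existsUnique_path b r
  have mem {u v w} (h : compNbhd T Y w = {u, v}) :
      u ∈ compNbhd T Y w ∧ v ∈ compNbhd T Y w := by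
    simp [h]
  rcases snd_eq_or_reachOff_of_ancestor hT (mem hx).1 (mem hx).2 hab hne hp with h | h <;>
    rcases snd_eq_or_reachOff_of_ancestor hT (mem hx').1 (mem hx').2 ha'b hne' hp with h' | h'
  · rw [hx, hx', ← h, ← h']
  · exact absurd (h ▸ (mem hx).1.1) h'.1
  · exact absurd (h' ▸ (mem hx').1.1) h.1
  · exact compNbhd_eq_of_reachOff (h.2.trans h'.2.symm)

variable [Finite V]

lemma ncard_compNbhd_le_two (hT : T.IsTree) (hY : LCAClosed T r Y) (x : V) :
    (compNbhd T Y x).ncard ≤ 2 := by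
  by_contra! h
  obtain ⟨a, ha, b, hb, c, hc, hab, hac, hbc⟩ := (Set.two_lt_ncard (Set.toFinite _)).mp h
  have hmid : ∀ {p m q}, p ∈ compNbhd T Y x → m ∈ compNbhd T Y x → q ∈ compNbhd T Y x →
      Ancestor T r p m → Ancestor T r m q → m = p ∨ m = q :=
    fun hp hm hq => eq_or_eq_of_ancestor_of_ancestor hT hp hm.1 hq
  have hcmp {u v} (hu : u ∈ compNbhd T Y x) (hv : v ∈ compNbhd T Y x) :=
    ancestor_or_ancestor_of_mem_compNbhd hT hY hu hv
  -- in each of the eight configurations one of `a`, `b`, `c` lies between the other two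
  rcases hcmp ha hb with h₁ | h₁ <;> rcases hcmp hb hc with h₂ | h₂ <;>
    rcases hcmp ha hc with h₃ | h₃
  all_goals first
    | have := hmid ha hb hc h₁ h₂ | have := hmid hc hb ha h₂ h₁ | have := hmid ha hc hb h₃ h₂
    | have := hmid hb hc ha h₂ h₃ | have := hmid hb ha hc h₁ h₃ | have := hmid hc ha hb h₃ h₁
  all_goals obtain rfl | rfl := this <;> contradiction

lemma ncard_singleton_regionNbhds_le :
    {N ∈ regionNbhds T Y | N.ncard = 1}.ncard ≤ Y.ncard :=
  calc _ ≤ ((fun y => ({y} : Set V)) '' Y).ncard := by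
        refine Set.ncard_le_ncard ?_ (Set.toFinite _)
        rintro N ⟨⟨x, -, rfl⟩, hN⟩
        obtain ⟨y, hy⟩ := Set.ncard_eq_one.mp hN
        have hyx : y ∈ compNbhd T Y x := by simp [hy]
        exact ⟨y, hyx.1, hy.symm⟩
    _ ≤ Y.ncard := Set.ncard_image_le (Set.toFinite Y)

lemma ncard_pair_regionNbhds_le (hT : T.IsTree) (hY : LCAClosed T r Y) :
    {N ∈ regionNbhds T Y | N.ncard = 2}.ncard ≤ Y.ncard := by
  have hpair : ∀ N ∈ {N ∈ regionNbhds T Y | N.ncard = 2}, ∃ x a b, N = compNbhd T Y x ∧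
      compNbhd T Y x = {a, b} ∧ a ≠ b ∧ Ancestor T r a b := by
    rintro N ⟨⟨x, -, rfl⟩, hN⟩
    obtain ⟨a, b, hab, hx⟩ := Set.ncard_eq_two.mp hN
    have ha : a ∈ compNbhd T Y x := by simp [hx]
    have hb : b ∈ compNbhd T Y x := by simp [hx]
    rcases ancestor_or_ancestor_of_mem_compNbhd hT hY ha hb with h | h
    · exact ⟨x, a, b, rfl, hx, hab, h⟩
    · exact ⟨x, b, a, rfl, hx.trans (Set.pair_comm a b), hab.symm, h⟩
  have : Nonempty V := ⟨r⟩
  choose! x a b hNx hx hab hanc using hpair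
  refine Set.ncard_le_ncard_of_injOn b (fun N hN => ?_) (fun N hN N' hN' hbb => ?_)
  · have hbN : b N ∈ compNbhd T Y (x N) := by simp [hx N hN]
    exact hbN.1
  · rw [hNx N hN, hNx N' hN']
    refine compNbhd_eq_of_eq_pair hT (hx N hN) ?_ (hanc N hN) (hbb ▸ hanc N' hN')
      (hab N hN) (hbb ▸ hab N' hN')
    rw [hx N' hN', hbb]

end Regions

theorem stmt13_general {V : Type*} [Fintype V]
    (T : SimpleGraph V) (hT : T.IsTree) (r : V)
    (Y : Set V) (hY : Y.Nonempty)
    (hclosed : ∀ u ∈ Y, ∀ v ∈ Y, ∀ l, IsLCA T r l u v → l ∈ Y) :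
    -- every region has at most two neighbors in `Y`:
    (∀ x, x ∉ Y → (compNbhd T Y x).ncard ≤ 2) ∧
    -- the number of regions (distinct neighborhoods of components) is at most `2 |Y|`:
    {N : Set V | ∃ x, x ∉ Y ∧ N = compNbhd T Y x}.ncard ≤ 2 * Y.ncard := by
  refine ⟨fun x _ => ncard_compNbhd_le_two hT hclosed x, ?_⟩
  have hsplit : regionNbhds T Y ⊆
      {N ∈ regionNbhds T Y | N.ncard = 1} ∪ {N ∈ regionNbhds T Y | N.ncard = 2} := by
    rintro N ⟨x, hx, rfl⟩
    have hle := ncard_compNbhd_le_two hT hclosed x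
    have hpos := (Set.ncard_pos (Set.toFinite _)).mpr
      (compNbhd_nonempty hT.connected.preconnected hY hx)
    obtain h | h : (compNbhd T Y x).ncard = 1 ∨ (compNbhd T Y x).ncard = 2 := by omega
    exacts [.inl ⟨⟨x, hx, rfl⟩, h⟩, .inr ⟨⟨x, hx, rfl⟩, h⟩]
  calc (regionNbhds T Y).ncard
      ≤ {N ∈ regionNbhds T Y | N.ncard = 1}.ncard + {N ∈ regionNbhds T Y | N.ncard = 2}.ncard :=
        (Set.ncard_le_ncard hsplit).trans (Set.ncard_union_le _ _)
    _ ≤ Y.ncard + Y.ncard :=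
        add_le_add ncard_singleton_regionNbhds_le (ncard_pair_regionNbhds_le hT hclosed)
    _ = 2 * Y.ncard := (two_mul _).symm

theorem stmt13 {V : Type*} [Fintype V] [DecidableEq V]
    (T : SimpleGraph V) (hT : T.IsTree) (r : V)
    (Y : Set V) (hY : Y.Nonempty)
    (hclosed : ∀ u ∈ Y, ∀ v ∈ Y, ∀ l, IsLCA T r l u v → l ∈ Y) :
    -- every region has at most two neighbors in `Y`:
    (∀ x, x ∉ Y → (compNbhd T Y x).ncard ≤ 2) ∧
    -- the number of regions (distinct neighborhoods of components) is at most `2 |Y|`: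
    {N : Set V | ∃ x, x ∉ Y ∧ N = compNbhd T Y x}.ncard ≤ 2 * Y.ncard :=
  stmt13_general T hT r Y hY hclosed
end

section
/- Let $c_1, c_2 \in \mathbb{R}_{\geq 0}^k$ be capacity vectors of two stars that strongly agree. Consider the bipartite auxiliary digraph $G_B$ with vertex set $K_1 \cup K_2$ (two copies of $[k]$), node capacity $c_1(i)$ on outgoing arcs of $i \in K_1$ and $c_2(i)$ on outgoing arcs of $i \in K_2$. Suppose a nonnegative arc-demand assignment $d'$ satisfies $d'(\text{out of } v) \leq c_B(v)$ for all $v$, and there is a set $X = X_1 \cup X_2$ ($X_j \subseteq K_j$) with: $d'(\text{out of } v) = c_B(v)$ for all $v \in X$, and every arc with positive $d'$ leaving $X_1$ ends in $X_2$ and every arc with positive $d'$ leaving $X_2$ ends in $X_1$. Then $c_1(X_1) \leq c_1(X_2)$ and $c_2(X_2) \leq c_2(X_1)$, and by strong agreement, $c_1(X_1) = c_1(X_2)$ and $c_2(X_1) = c_2(X_2)$. -/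
open Finset

lemma key16 {k : ℕ} (c : Fin k → ℝ) (d : Fin k → Fin k → ℝ)
    (hd : ∀ i j, 0 ≤ d i j) (hs : ∀ i j, d i j = d j i)
    (hc : ∀ i, ∑ j, d i j ≤ c i) (X Y : Finset (Fin k))
    (hsat : ∀ i ∈ X, ∑ j, d i j = c i)
    (harc : ∀ i ∈ X, ∀ j, 0 < d i j → j ∈ Y) :
    ∑ i ∈ X, c i ≤ ∑ i ∈ Y, c i := by
  have h1 : ∑ i ∈ X, c i = ∑ i ∈ X, ∑ j ∈ Y, d i j := by
    refine Finset.sum_congr rfl fun i hi => ?_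
    rw [← hsat i hi]
    rw [← Finset.sum_subset (Finset.subset_univ Y)]
    intro j _ hj
    by_contra h
    exact hj (harc i hi j (lt_of_le_of_ne (hd i j) (Ne.symm h)))
  calc ∑ i ∈ X, c i = ∑ i ∈ X, ∑ j ∈ Y, d i j := h1
    _ ≤ ∑ i, ∑ j ∈ Y, d i j := by
        refine Finset.sum_le_sum_of_subset_of_nonneg (Finset.subset_univ X) ?_
        intro i _ _; exact Finset.sum_nonneg fun j _ => hd i j
    _ = ∑ j ∈ Y, ∑ i, d j i := by
        rw [Finset.sum_comm]
        exact Finset.sum_congr rfl fun j _ => Finset.sum_congr rfl fun i _ => (hs i j)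
    _ ≤ ∑ j ∈ Y, c j := Finset.sum_le_sum fun j _ => hc j

theorem stmt16 (k : ℕ) (c1 c2 : Fin k → ℝ) (h1 : ∀ i, 0 ≤ c1 i) (h2 : ∀ i, 0 ≤ c2 i)
    (hsa : ∀ A B : Finset (Fin k), Disjoint A B →
      ((∑ i ∈ A, c1 i ≤ ∑ i ∈ B, c1 i) ↔ (∑ i ∈ A, c2 i ≤ ∑ i ∈ B, c2 i)))
    (d1 d2 : Fin k → Fin k → ℝ)
    (hd1 : ∀ i j, 0 ≤ d1 i j) (hd2 : ∀ i j, 0 ≤ d2 i j)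
    (hs1 : ∀ i j, d1 i j = d1 j i) (hs2 : ∀ i j, d2 i j = d2 j i)
    (hc1 : ∀ i, ∑ j, d1 i j ≤ c1 i) (hc2 : ∀ i, ∑ j, d2 i j ≤ c2 i)
    (X1 X2 : Finset (Fin k))
    (hsat1 : ∀ i ∈ X1, ∑ j, d1 i j = c1 i) (hsat2 : ∀ i ∈ X2, ∑ j, d2 i j = c2 i)
    (harc1 : ∀ i ∈ X1, ∀ j, 0 < d1 i j → j ∈ X2)
    (harc2 : ∀ i ∈ X2, ∀ j, 0 < d2 i j → j ∈ X1) :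
    (∑ i ∈ X1, c1 i ≤ ∑ i ∈ X2, c1 i) ∧ (∑ i ∈ X2, c2 i ≤ ∑ i ∈ X1, c2 i) ∧
    (∑ i ∈ X1, c1 i = ∑ i ∈ X2, c1 i) ∧ (∑ i ∈ X1, c2 i = ∑ i ∈ X2, c2 i) := by
  have hA : ∑ i ∈ X1, c1 i ≤ ∑ i ∈ X2, c1 i :=
    key16 c1 d1 hd1 hs1 hc1 X1 X2 hsat1 harc1
  have hB : ∑ i ∈ X2, c2 i ≤ ∑ i ∈ X1, c2 i :=
    key16 c2 d2 hd2 hs2 hc2 X2 X1 hsat2 harc2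
  -- reduce to differences
  have hdisj : Disjoint (X1 \ X2) (X2 \ X1) := disjoint_sdiff_sdiff
  have split1 : ∀ c : Fin k → ℝ, ∑ i ∈ X1, c i = ∑ i ∈ X1 ∩ X2, c i + ∑ i ∈ X1 \ X2, c i :=
    fun c => (Finset.sum_inter_add_sum_sdiff X1 X2 c).symm
  have split2 : ∀ c : Fin k → ℝ, ∑ i ∈ X2, c i = ∑ i ∈ X1 ∩ X2, c i + ∑ i ∈ X2 \ X1, c i := by
    intro c
    rw [Finset.inter_comm]
    exact (Finset.sum_inter_add_sum_sdiff X2 X1 c).symm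
  have hA' : ∑ i ∈ X1 \ X2, c1 i ≤ ∑ i ∈ X2 \ X1, c1 i := by
    have := hA; rw [split1 c1, split2 c1] at this; linarith
  have hc2' : ∑ i ∈ X1 \ X2, c2 i ≤ ∑ i ∈ X2 \ X1, c2 i := (hsa _ _ hdisj).mp hA'
  have h2eq : ∑ i ∈ X1, c2 i = ∑ i ∈ X2, c2 i := by
    rw [split1 c2, split2 c2]; rw [split1 c2, split2 c2] at hB; linarith
  have hB' : ∑ i ∈ X2 \ X1, c2 i ≤ ∑ i ∈ X1 \ X2, c2 i := by
    rw [split1 c2, split2 c2] at hB; linarith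
  have hc1' : ∑ i ∈ X2 \ X1, c1 i ≤ ∑ i ∈ X1 \ X2, c1 i := (hsa _ _ hdisj.symm).mpr hB'
  have h1eq : ∑ i ∈ X1, c1 i = ∑ i ∈ X2, c1 i := by
    rw [split1 c1, split2 c1]; linarith
  exact ⟨hA, hB, h1eq, h2eq⟩
end

section
/- Let $c \in \mathbb{R}_{\geq 0}^k$ be the capacity vector of a star with center $v$ on terminals $[k]$ in a bipartite network $G$ (terminals on one side, star centers on the other). Suppose $c = \sum_{i=1}^{\ell} \lambda_i q_i$ with $\lambda_i \geq 0$ and each $q_i$ agrees with $c$ (i.e., $q_i(S) \leq q_i([k]\setminus S)$ whenever $c(S) \leq c([k]\setminus S)$). Then for every $A \subseteq [k]$ with $c(A) \leq c([k] \setminus A)$, replacing $v$ by $\ell$ star centers $w_1, \ldots, w_\ell$ with capacity vectors $\lambda_i q_i$ preserves the minimum cut value separating $A$: there is a minimum cut in the new graph avoiding all $w_i$, of the same capacity as the minimum cut in $G$ avoiding $v$. -/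
open Finset

theorem stmt17 (k ℓ : ℕ) (c : Fin k → ℝ) (hc : ∀ i, 0 ≤ c i)
    (q : Fin ℓ → Fin k → ℝ) (hq : ∀ i j, 0 ≤ q i j)
    (lam : Fin ℓ → ℝ) (hlam : ∀ i, 0 ≤ lam i)
    (hcomb : ∀ j, c j = ∑ i, lam i * q i j)
    -- every `q i` agrees with `c`:
    (hagree : ∀ (i : Fin ℓ) (S : Finset (Fin k)),
      (∑ j ∈ S, c j ≤ ∑ j ∈ Sᶜ, c j) → ∑ j ∈ S, q i j ≤ ∑ j ∈ Sᶜ, q i j)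
    (A : Finset (Fin k)) (hA : ∑ j ∈ A, c j ≤ ∑ j ∈ Aᶜ, c j) :
    -- each replacement star `w i` (with capacities `lam i • q i`) is avoided by a
    -- minimum cut separating `A` (its contribution is attained on the `A` side), and
    -- the total min-cut contribution of the replacement stars equals that of the
    -- original star `v` (which is avoided by a minimum cut since `c(A) ≤ c([k]\A)`):
    (∀ i, lam i * ∑ j ∈ A, q i j ≤ lam i * ∑ j ∈ Aᶜ, q i j) ∧
    (∑ i, min (lam i * ∑ j ∈ A, q i j) (lam i * ∑ j ∈ Aᶜ, q i j)
      = min (∑ j ∈ A, c j) (∑ j ∈ Aᶜ, c j)) ∧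
    (∑ i, lam i * ∑ j ∈ A, q i j = ∑ j ∈ A, c j) := by
  have h1 : ∀ i, lam i * ∑ j ∈ A, q i j ≤ lam i * ∑ j ∈ Aᶜ, q i j := fun i =>
    mul_le_mul_of_nonneg_left (hagree i A hA) (hlam i)
  have h3 : ∑ i, lam i * ∑ j ∈ A, q i j = ∑ j ∈ A, c j := by
    simp only [hcomb, Finset.mul_sum]
    rw [Finset.sum_comm]
  refine ⟨h1, ?_, h3⟩
  rw [min_eq_left hA, ← h3]
  exact Finset.sum_congr rfl fun i _ => min_eq_left (h1 i)
end

section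
/- Let $c_1, c_2 \in \mathbb{R}_{\geq 0}^k$ be capacity vectors of two stars on terminal set $[k]$ such that $\mathcal{S}_{c_1} = \mathcal{S}_{c_2}$, where $\mathcal{S}_c = \{S \subseteq [k] : c(S) \leq c([k]\setminus S)\}$. Then for every $A \subseteq [k]$: $\min(c_1(A), c_1([k]\setminus A)) + \min(c_2(A), c_2([k]\setminus A)) = \min(c_1(A) + c_2(A),\; c_1([k]\setminus A) + c_2([k]\setminus A))$. Consequently, merging the two star centers into one with capacity vector $c_1 + c_2$ preserves all minimum terminal cut values in a bipartite network. -/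
open Finset

theorem stmt19 (k : ℕ) (c1 c2 : Fin k → ℝ) (h1 : ∀ i, 0 ≤ c1 i) (h2 : ∀ i, 0 ≤ c2 i)
    -- `S_{c1} = S_{c2}`:
    (hS : ∀ S : Finset (Fin k),
      (∑ i ∈ S, c1 i ≤ ∑ i ∈ Sᶜ, c1 i) ↔ (∑ i ∈ S, c2 i ≤ ∑ i ∈ Sᶜ, c2 i)) :
    ∀ A : Finset (Fin k),
      -- the min-cut contributions of the two stars add up to that of the merged star:
      (min (∑ i ∈ A, c1 i) (∑ i ∈ Aᶜ, c1 i) + min (∑ i ∈ A, c2 i) (∑ i ∈ Aᶜ, c2 i)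
        = min (∑ i ∈ A, c1 i + ∑ i ∈ A, c2 i) (∑ i ∈ Aᶜ, c1 i + ∑ i ∈ Aᶜ, c2 i)) ∧
      -- consequently, in any bipartite network containing further stars `other`,
      -- all minimum terminal cut values are preserved by merging the two centers:
      ∀ (n : ℕ) (other : Fin n → Fin k → ℝ),
        (∑ s, min (∑ i ∈ A, other s i) (∑ i ∈ Aᶜ, other s i))
            + min (∑ i ∈ A, c1 i) (∑ i ∈ Aᶜ, c1 i)
            + min (∑ i ∈ A, c2 i) (∑ i ∈ Aᶜ, c2 i)
          = (∑ s, min (∑ i ∈ A, other s i) (∑ i ∈ Aᶜ, other s i))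
            + min (∑ i ∈ A, (c1 i + c2 i)) (∑ i ∈ Aᶜ, (c1 i + c2 i)) := by
  intro A
  have key : min (∑ i ∈ A, c1 i) (∑ i ∈ Aᶜ, c1 i) + min (∑ i ∈ A, c2 i) (∑ i ∈ Aᶜ, c2 i)
      = min (∑ i ∈ A, c1 i + ∑ i ∈ A, c2 i) (∑ i ∈ Aᶜ, c1 i + ∑ i ∈ Aᶜ, c2 i) := by
    by_cases h : ∑ i ∈ A, c1 i ≤ ∑ i ∈ Aᶜ, c1 i
    · have h' := (hS A).mp h
      rw [min_eq_left h, min_eq_left h', min_eq_left (add_le_add h h')]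
    · push_neg at h
      have h' : ¬ (∑ i ∈ A, c2 i ≤ ∑ i ∈ Aᶜ, c2 i) := fun hc => absurd ((hS A).mpr hc) (not_le.mpr h)
      push_neg at h'
      rw [min_eq_right h.le, min_eq_right h'.le, min_eq_right (add_le_add h.le h'.le)]
  refine ⟨key, fun n other => ?_⟩
  rw [add_assoc, key, Finset.sum_add_distrib, Finset.sum_add_distrib]
end
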